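/- arXiv:1709.03663 — 7 statements merged into one kernel-verified Lean document; each statement's English description precedes it below -/
import Mathlib

section
/- A linear threshold function f on n variables is Semi-Goldilocks (i.e., it has a positive realization and it has a small realization) if and only if it has a single realization (w, θ) that is simultaneously positive and small, i.e., 0 < w_i ≤ θ for all i. -/
/-- Dot product of a rational weight vector with a 0-1 boolean vector. -/
def dotProd {n : ℕ} (w : Fin n → ℚ) (x : Fin n → Bool) : ℚ :=
  ∑ i, if x i then w i else 0

/-- `(w, θ)` is a realization of the boolean function `f`. -/
def IsRealization {n : ℕ} (f : (Fin n → Bool) → Bool) (w : Fin n → ℚ) (θ : ℚ) : Prop :=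
  ∀ x, f x = true ↔ θ < dotProd w x

/-- `f` is a linear threshold function. -/
def IsLTF {n : ℕ} (f : (Fin n → Bool) → Bool) : Prop :=
  ∃ w θ, IsRealization f w θ

theorem dotProd_indicator {n : ℕ} (w : Fin n → ℚ) (i : Fin n) :
    dotProd w (fun j => decide (j = i)) = w i := by
  simp [dotProd]

namespace IsRealization

variable {n : ℕ} {f : (Fin n → Bool) → Bool} {w : Fin n → ℚ} {θ : ℚ}

theorem apply_indicator_iff (h : IsRealization f w θ) (i : Fin n) :
    f (fun j => decide (j = i)) = true ↔ θ < w i := by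
  rw [h, dotProd_indicator]

theorem lt_iff_lt {w' : Fin n → ℚ} {θ' : ℚ} (h : IsRealization f w θ)
    (h' : IsRealization f w' θ') (i : Fin n) : θ < w i ↔ θ' < w' i :=
  (h.apply_indicator_iff i).symm.trans (h'.apply_indicator_iff i)

/-- Smallness says that `f` vanishes on every unit vector, so it is a property of `f` rather
than of the realization. -/
theorem le_of_forall_le {w' : Fin n → ℚ} {θ' : ℚ} (h : IsRealization f w θ)
    (h' : IsRealization f w' θ') (hsmall : ∀ i, w' i ≤ θ') (i : Fin n) : w i ≤ θ :=
  not_lt.mp fun hlt => (hsmall i).not_gt ((h.lt_iff_lt h' i).mp hlt)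

end IsRealization

theorem stmt_1_general (n : ℕ) (f : (Fin n → Bool) → Bool) :
    ((∃ w θ, IsRealization f w θ ∧ ∀ i, 0 < w i) ∧
        (∃ w θ, IsRealization f w θ ∧ ∀ i, w i ≤ θ)) ↔
      ∃ w θ, IsRealization f w θ ∧ ∀ i, 0 < w i ∧ w i ≤ θ := by
  constructor
  · rintro ⟨⟨w, θ, hw, hpos⟩, ⟨w', θ', hw', hsmall⟩⟩
    exact ⟨w, θ, hw, fun i => ⟨hpos i, hw.le_of_forall_le hw' hsmall i⟩⟩
  · rintro ⟨w, θ, hw, h⟩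
    exact ⟨⟨w, θ, hw, fun i => (h i).1⟩, ⟨w, θ, hw, fun i => (h i).2⟩⟩

/-- An LTF is Semi-Goldilocks (has a positive realization and a small realization) iff
it has a single realization that is simultaneously positive and small. -/
theorem stmt_1 (n : ℕ) (f : (Fin n → Bool) → Bool) (hf : IsLTF f) :
    ((∃ w θ, IsRealization f w θ ∧ ∀ i, 0 < w i) ∧
        (∃ w θ, IsRealization f w θ ∧ ∀ i, w i ≤ θ)) ↔
      ∃ w θ, IsRealization f w θ ∧ ∀ i, 0 < w i ∧ w i ≤ θ :=
  stmt_1_general n f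
end

section
/- A linear threshold function f on n variables is Goldilocks (i.e., it has a positive realization, a small realization, and an ample realization) if and only if it has a single realization (w, θ) that is simultaneously positive, small, and ample, i.e., 0 < w_i ≤ θ for all i and Σ_{i=1}^n w_i > 2θ. -/
/-!
Start from a positive realization `(w, θ)` and raise the threshold to the largest value of
`w · y` over the points `y` with `f y = false`. A small realization forces `f` to vanish on
the unit vectors, so each `w i` is at most the new threshold. An ample realization forbids `f`
to vanish on both `y` and its complement, since `w · y + w · (¬y) = ∑ w`; applied to the
maximizing point this gives `2 θ < ∑ w` for the new threshold.
-/

section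

variable {n : ℕ} {f : (Fin n → Bool) → Bool} {w : Fin n → ℚ} {θ : ℚ}

lemma dotProd_single (w : Fin n → ℚ) (i : Fin n) :
    dotProd w (fun j => decide (j = i)) = w i := by
  simp [dotProd]

lemma dotProd_false (w : Fin n → ℚ) : dotProd w (fun _ => false) = 0 := by
  simp [dotProd]

lemma dotProd_add_dotProd_not (w : Fin n → ℚ) (x : Fin n → Bool) :
    dotProd w x + dotProd w (fun i => !x i) = ∑ i, w i := by
  rw [dotProd, dotProd, ← Finset.sum_add_distrib]
  refine Finset.sum_congr rfl fun i _ => ?_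
  cases x i <;> simp

namespace IsRealization

lemma lt_dotProd (h : IsRealization f w θ) {x : Fin n → Bool} (hx : f x = true) :
    θ < dotProd w x :=
  (h x).1 hx

lemma dotProd_le (h : IsRealization f w θ) {x : Fin n → Bool} (hx : f x = false) :
    dotProd w x ≤ θ :=
  not_lt.1 fun hlt => by simp [(h x).2 hlt] at hx

lemma apply_single_eq_false (h : IsRealization f w θ) (hsmall : ∀ i, w i ≤ θ) (i : Fin n) :
    f (fun j => decide (j = i)) = false := by
  rw [← Bool.not_eq_true, h, dotProd_single, not_lt]
  exact hsmall i

lemma apply_not_eq_true (h : IsRealization f w θ) (hample : 2 * θ < ∑ i, w i)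
    {x : Fin n → Bool} (hx : f x = false) : f (fun i => !x i) = true := by
  rw [h, ← not_le]
  intro hle
  have := h.dotProd_le hx
  linarith [dotProd_add_dotProd_not w x]

lemma exists_dotProd_realization (h : IsRealization f w θ) {x : Fin n → Bool}
    (hx : f x = false) : ∃ y, f y = false ∧ IsRealization f w (dotProd w y) := by
  obtain ⟨y, hy, hmax⟩ := Finset.exists_max_image {z | f z = false} (dotProd w) ⟨x, by simpa⟩
  simp only [Finset.mem_filter, Finset.mem_univ, true_and] at hy hmax
  refine ⟨y, hy, fun z => ⟨fun hz => ?_, fun hlt => ?_⟩⟩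
  · exact (h.dotProd_le hy).trans_lt (h.lt_dotProd hz)
  · by_contra hz
    exact (hmax z (Bool.eq_false_iff.2 hz)).not_gt hlt

end IsRealization

end

theorem stmt_2_general (n : ℕ) (f : (Fin n → Bool) → Bool) :
    ((∃ w θ, IsRealization f w θ ∧ ∀ i, 0 < w i) ∧
        (∃ w θ, IsRealization f w θ ∧ ∀ i, w i ≤ θ) ∧
        (∃ w θ, IsRealization f w θ ∧ 2 * θ < ∑ i, w i)) ↔
      ∃ w θ, IsRealization f w θ ∧ (∀ i, 0 < w i ∧ w i ≤ θ) ∧ 2 * θ < ∑ i, w i := by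
  refine ⟨?_, fun ⟨w, θ, h, hw, hample⟩ =>
    ⟨⟨w, θ, h, fun i => (hw i).1⟩, ⟨w, θ, h, fun i => (hw i).2⟩, ⟨w, θ, h, hample⟩⟩⟩
  rintro ⟨⟨w, θ, h, hpos⟩, ⟨ws, θs, hs, hsmall⟩, ⟨wa, θa, ha, hample⟩⟩
  have hsum : 0 ≤ ∑ i, w i := Finset.sum_nonneg fun i _ => (hpos i).le
  by_cases hfalse : ∃ x, f x = false
  · obtain ⟨x, hx⟩ := hfalse
    obtain ⟨y, hy, hy'⟩ := h.exists_dotProd_realization hx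
    refine ⟨w, _, hy', fun i => ⟨hpos i, ?_⟩, ?_⟩
    · simpa [dotProd_single] using hy'.dotProd_le (hs.apply_single_eq_false hsmall i)
    · have := hy'.lt_dotProd (ha.apply_not_eq_true hample hy)
      linarith [dotProd_add_dotProd_not w y]
  · simp only [not_exists, Bool.not_eq_false] at hfalse
    have hθ := h.lt_dotProd (hfalse fun _ => false)
    rw [dotProd_false] at hθ
    refine ⟨w, θ, h, fun i => ?_, by linarith⟩
    simpa [hfalse] using hs.apply_single_eq_false hsmall i

/-- An LTF is Goldilocks (has a positive realization, a small realization and an ample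
realization) iff it has a single realization that is simultaneously positive, small
and ample. -/
theorem stmt_2 (n : ℕ) (f : (Fin n → Bool) → Bool) (hf : IsLTF f) :
    ((∃ w θ, IsRealization f w θ ∧ ∀ i, 0 < w i) ∧
        (∃ w θ, IsRealization f w θ ∧ ∀ i, w i ≤ θ) ∧
        (∃ w θ, IsRealization f w θ ∧ 2 * θ < ∑ i, w i)) ↔
      ∃ w θ, IsRealization f w θ ∧ (∀ i, 0 < w i ∧ w i ≤ θ) ∧ 2 * θ < ∑ i, w i :=
  stmt_2_general n f
end

section
/- (Amplification) Let f be a linear threshold function on n variables such that f(x) = 0 implies f(x̄) = 1 for all x ∈ {0,1}^n (f is ample), and let (w, θ) be any realization of f. Then there exists θ' ∈ ℚ with θ' ≤ θ such that (w, θ') is also a realization of f and Σ_{i=1}^n w_i > 2θ'. -/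
/-!
Lowering the bias of a realization is harmless as long as no value `w·x` of a false point is
crossed, so we may lower `θ` to the largest such value `m = w·x₀` (or, if `f ≡ 1`, as far as we
like). Ampleness makes `x̄₀` a true point, whence `m ≤ θ < w·x̄₀ = ∑ wᵢ - m`, i.e. `2m < ∑ wᵢ`.
-/

section

variable {n : ℕ}

lemma dotProd_not (w : Fin n → ℚ) (x : Fin n → Bool) :
    dotProd w (fun i => !(x i)) = (∑ i, w i) - dotProd w x := by
  unfold dotProd
  rw [← Finset.sum_sub_distrib]
  refine Finset.sum_congr rfl fun i _ => ?_
  cases hxi : x i <;> simp [hxi]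

namespace IsRealization

variable {f : (Fin n → Bool) → Bool} {w : Fin n → ℚ} {θ : ℚ}

lemma dotProd_le_of_eq_false (hr : IsRealization f w θ) {x : Fin n → Bool}
    (hx : f x = false) : dotProd w x ≤ θ := by
  simpa [hx] using (hr x).not

lemma of_le (hr : IsRealization f w θ) {θ' : ℚ} (hθ' : θ' ≤ θ)
    (htrue : ∀ x, θ' < dotProd w x → f x = true) : IsRealization f w θ' :=
  fun x => ⟨fun hx => hθ'.trans_lt ((hr x).mp hx), htrue x⟩

lemma two_mul_dotProd_lt_sum (hample : ∀ x, f x = false → f (fun i => !(x i)) = true)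
    (hr : IsRealization f w θ) {x : Fin n → Bool} (hx : f x = false) :
    2 * dotProd w x < ∑ i, w i := by
  have hle := hr.dotProd_le_of_eq_false hx
  have hlt := (hr _).mp (hample x hx)
  rw [dotProd_not] at hlt
  linarith

end IsRealization

end

/-- Amplification: any realization of an ample LTF can be amplified to an ample
realization with the same weight vector and a smaller bias. -/
theorem stmt_5 (n : ℕ) (f : (Fin n → Bool) → Bool)
    (hample : ∀ x, f x = false → f (fun i => !(x i)) = true)
    (w : Fin n → ℚ) (θ : ℚ) (hr : IsRealization f w θ) :
    ∃ θ' : ℚ, θ' ≤ θ ∧ IsRealization f w θ' ∧ 2 * θ' < ∑ i, w i := by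
  by_cases hfalse : ∃ x, f x = false
  · obtain ⟨x₀, hx₀, hmax⟩ := Finset.exists_max_image
      (Finset.univ.filter fun x => f x = false) (dotProd w)
      (by simpa [Finset.filter_nonempty_iff] using hfalse)
    have hx₀_false : f x₀ = false := (Finset.mem_filter.mp hx₀).2
    have hθ' := hr.dotProd_le_of_eq_false hx₀_false
    refine ⟨dotProd w x₀, hθ', hr.of_le hθ' fun x hx => ?_,
      hr.two_mul_dotProd_lt_sum hample hx₀_false⟩
    by_contra hfx
    exact (hmax x (by simpa using hfx)).not_gt hx
  · push Not at hfalse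
    refine ⟨min θ ((∑ i, w i) / 2 - 1), min_le_left _ _,
      hr.of_le (min_le_left _ _) fun x _ => by simpa using hfalse x, ?_⟩
    linarith [min_le_right θ ((∑ i, w i) / 2 - 1)]
end

section
/- Let f be a linear threshold function on n variables. Then f has a realization (w, θ) with w_i > 0 for all i if and only if f is monotone in each coordinate, i.e., f(x_1,…,x_{i−1},1,x_{i+1},…,x_n) ≥ f(x_1,…,x_{i−1},0,x_{i+1},…,x_n) for all i and all choices of the remaining coordinates. -/
/-!
A realization with nonnegative weights makes `f` monotone, since raising a coordinate can only
increase `w · x`. Conversely, if `f` is monotone, clipping the negative weights of a realization to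
`0` does not change `f`: on a false point `x`, the clipped value is `w · x'` for the point
`x' ≤ x` that keeps only the coordinates with positive weight, and `f x' = false` by
monotonicity. Finally all weights can be raised by a small `ε > 0`, compensated by raising
the threshold by `n ε`, which fits into the slack left between the threshold and the finitely
many values `w · x` above it.
-/

open Function Filter Topology

theorem monotone_of_monotone_update {ι α : Type*} {π : ι → Type*} [Fintype ι]
    [DecidableEq ι] [∀ i, Preorder (π i)] [Preorder α] {f : (∀ i, π i) → α}
    (hf : ∀ x i, Monotone fun a => f (update x i a)) : Monotone f := by
  intro x y hxy
  have chain : ∀ s : Finset ι, f x ≤ f (s.piecewise y x) := by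
    intro s
    induction s using Finset.induction_on with
    | empty => rw [Finset.piecewise_empty]
    | insert i s hi ih =>
      rw [Finset.piecewise_insert]
      refine ih.trans ?_
      conv_lhs =>
        rw [← update_eq_self i (s.piecewise y x), Finset.piecewise_eq_of_notMem _ _ _ hi]
      exact hf _ i (hxy i)
  simpa using chain Finset.univ

theorem Bool.monotone_of_le_false_true {α : Type*} [Preorder α] {g : Bool → α}
    (h : g false ≤ g true) : Monotone g := by
  rintro (_ | _) (_ | _) hab
  exacts [le_rfl, h, absurd hab (by decide), le_rfl]

section dotProd

variable {n : ℕ}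

theorem dotProd_mono_left {v w : Fin n → ℚ} (hvw : v ≤ w) (x : Fin n → Bool) :
    dotProd v x ≤ dotProd w x :=
  Finset.sum_le_sum fun i _ => by split_ifs <;> simp [hvw i]

theorem dotProd_mono_right {w : Fin n → ℚ} (hw : 0 ≤ w) : Monotone (dotProd w) := by
  intro x y hxy
  refine Finset.sum_le_sum fun i _ => ?_
  have hi := hxy i
  have hwi : 0 ≤ w i := hw i
  revert hi
  cases x i <;> cases y i <;> simp [hwi]

theorem dotProd_add (v w : Fin n → ℚ) (x : Fin n → Bool) :
    dotProd (v + w) x = dotProd v x + dotProd w x := by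
  simp only [dotProd, ← Finset.sum_add_distrib]
  exact Finset.sum_congr rfl fun i _ => by split_ifs <;> simp

theorem dotProd_const_le {ε : ℚ} (hε : 0 ≤ ε) (x : Fin n → Bool) :
    dotProd (fun _ => ε) x ≤ n * ε :=
  calc dotProd (fun _ => ε) x ≤ ∑ _ : Fin n, ε :=
        Finset.sum_le_sum fun i _ => by split_ifs <;> simp [hε]
    _ = n * ε := by simp

theorem dotProd_max_zero (w : Fin n → ℚ) (x : Fin n → Bool) :
    dotProd (fun i => max (w i) 0) x = dotProd w (fun i => x i && decide (0 < w i)) := by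
  refine Finset.sum_congr rfl fun i _ => ?_
  by_cases hw : 0 < w i
  · cases hx : x i <;> simp [hx, hw, hw.le]
  · cases hx : x i <;> simp [hx, hw, not_lt.1 hw]

end dotProd

namespace IsRealization

variable {n : ℕ} {f : (Fin n → Bool) → Bool} {w : Fin n → ℚ} {θ : ℚ}

theorem monotone (h : IsRealization f w θ) (hw : 0 ≤ w) : Monotone f := by
  intro x y hxy
  rw [Bool.le_iff_imp, h, h]
  exact fun hx => hx.trans_le (dotProd_mono_right hw hxy)

theorem max_zero (h : IsRealization f w θ) (hf : Monotone f) :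
    IsRealization f (fun i => max (w i) 0) θ := by
  intro x
  refine ⟨fun hx => ((h x).1 hx).trans_le (dotProd_mono_left (fun i => le_max_left _ _) x),
    fun hx => ?_⟩
  rw [dotProd_max_zero, ← h] at hx
  exact Bool.le_iff_imp.1 (hf fun i => Bool.and_le_left _ _) hx

theorem exists_gt (h : IsRealization f w θ) : ∃ θ' > θ, IsRealization f w θ' := by
  have above : ∀ᶠ t in 𝓝 θ, ∀ x, θ < dotProd w x → t < dotProd w x :=
    eventually_all.2 fun x =>
      if hx : θ < dotProd w x then (eventually_lt_nhds hx).mono fun _ ht _ => ht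
      else Eventually.of_forall fun _ hx' => absurd hx' hx
  obtain ⟨θ', hθθ', hθ'⟩ := above.exists_gt
  exact ⟨θ', hθθ', fun x => (h x).trans ⟨hθ' x, hθθ'.trans⟩⟩

theorem exists_pos (h : IsRealization f w θ) (hw : 0 ≤ w) :
    ∃ w' θ', IsRealization f w' θ' ∧ ∀ i, 0 < w' i := by
  obtain ⟨θ', hθθ', h'⟩ := h.exists_gt
  obtain ⟨ε, hε, hnε⟩ : ∃ ε : ℚ, 0 < ε ∧ n * ε ≤ θ' - θ := by
    refine ⟨(θ' - θ) / (n + 1), div_pos (sub_pos.2 hθθ') (by positivity), ?_⟩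
    rw [mul_div_assoc', div_le_iff₀ (by positivity)]
    nlinarith
  refine ⟨w + fun _ => ε, θ + n * ε, fun x => ⟨fun hx => ?_, fun hx => ?_⟩,
    fun i => add_pos_of_nonneg_of_pos (hw i) hε⟩
  · have hlt : θ' < dotProd w x := (h' x).1 hx
    have hle : dotProd w x ≤ dotProd (w + fun _ => ε) x :=
      dotProd_mono_left (le_add_of_nonneg_right fun _ => hε.le) x
    linarith
  · have hconst := dotProd_const_le hε.le x
    rw [dotProd_add] at hx
    exact (h x).2 (by linarith)

end IsRealization

/-- An LTF has a positive realization iff it is monotone in each coordinate. -/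
theorem stmt_6 (n : ℕ) (f : (Fin n → Bool) → Bool) (hf : IsLTF f) :
    (∃ w θ, IsRealization f w θ ∧ ∀ i, 0 < w i) ↔
      ∀ (i : Fin n) (x : Fin n → Bool),
        f (Function.update x i false) ≤ f (Function.update x i true) := by
  constructor
  · rintro ⟨w, θ, hw, hpos⟩ i x
    exact hw.monotone (fun i => (hpos i).le) (update_mono (by decide))
  · intro h
    obtain ⟨w, θ, hw⟩ := hf
    have hmono : Monotone f :=
      monotone_of_monotone_update fun x i => Bool.monotone_of_le_false_true (h i x)
    exact (hw.max_zero hmono).exists_pos fun i => le_max_right _ _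
end

section
/- Let f be a linear threshold function on n variables that is positive (monotone in each coordinate) and ample (f(x) = 0 implies f(x̄) = 1 for all x). If f is not self-dual (f ≠ f^d), then the dual f^d is small, i.e., f^d(ê_i) = 0 for every standard basis vector ê_i. -/
/-!
If `f x ≠ f^d x` then `f x = f x̄`, and ampleness forces both values to be `true`. Whatever
`i` is, one of `x`, `x̄` vanishes at `i` and so lies below `ē_i`; by positivity `f ē_i = true`,
that is, `f^d ê_i = false`.
-/

section BoolFunction

variable {ι : Type*} {f : (ι → Bool) → Bool}

theorem exists_apply_eq_apply_not_of_ne_dual (h : f ≠ fun x => !(f fun i => !(x i))) :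
    ∃ x, f x = f fun i => !(x i) := by
  obtain ⟨x, hx⟩ := Function.ne_iff.mp h
  exact ⟨x, by simpa using hx⟩

theorem apply_eq_true_of_apply_eq_apply_not
    (hample : ∀ x, f x = false → f (fun i => !(x i)) = true) {x : ι → Bool}
    (hx : f x = f fun i => !(x i)) : f x = true := by
  by_contra h
  rw [Bool.not_eq_true] at h
  have h_not := hample x h
  rw [← hx, h] at h_not
  exact Bool.false_ne_true h_not

theorem le_not_single_of_apply_eq_false [DecidableEq ι] {x : ι → Bool} {i : ι}
    (hi : x i = false) : x ≤ fun j => !(decide (j = i)) := by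
  intro j
  by_cases hj : j = i
  · subst hj
    simp [hi]
  · simp [hj]

theorem Monotone.apply_not_single_eq_true [DecidableEq ι] (hf : Monotone f) {x : ι → Bool}
    {i : ι} (hx : f x = true) (hi : x i = false) : (f fun j => !(decide (j = i))) = true :=
  le_antisymm (Bool.le_true _) (hx ▸ hf (le_not_single_of_apply_eq_false hi))

end BoolFunction

theorem stmt_13_general (n : ℕ) (f : (Fin n → Bool) → Bool)
    (hpos : ∀ x y : Fin n → Bool, (∀ i, x i ≤ y i) → f x ≤ f y)
    (hample : ∀ x, f x = false → f (fun i => !(x i)) = true)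
    (hnsd : f ≠ fun x => !(f fun i => !(x i))) :
    ∀ i : Fin n, (!(f fun j => !(decide (j = i)))) = false := by
  intro i
  have hmono : Monotone f := fun x y hxy => hpos x y hxy
  obtain ⟨x, hx⟩ := exists_apply_eq_apply_not_of_ne_dual hnsd
  have hx_true : f x = true := apply_eq_true_of_apply_eq_apply_not hample hx
  rw [Bool.not_eq_false']
  cases hxi : x i
  · exact hmono.apply_not_single_eq_true hx_true hxi
  · exact hmono.apply_not_single_eq_true (hx ▸ hx_true) (by simp [hxi])

/-- If `f` is a positive ample LTF which is not self-dual, then its dual is small. -/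
theorem stmt_13 (n : ℕ) (f : (Fin n → Bool) → Bool) (hf : IsLTF f)
    (hpos : ∀ x y : Fin n → Bool, (∀ i, x i ≤ y i) → f x ≤ f y)
    (hample : ∀ x, f x = false → f (fun i => !(x i)) = true)
    (hnsd : f ≠ fun x => !(f fun i => !(x i))) :
    ∀ i : Fin n, (!(f fun j => !(decide (j = i)))) = false :=
  stmt_13_general n f hpos hample hnsd
end

section
/- Let f be a linear threshold function on n variables and let i ∈ {1,…,n}. Then the i-th Chow parameter a_i equals 2^{n−1} if and only if f is independent of its i-th coordinate, i.e., f(x_1,…,x_{i−1},1,x_{i+1},…,x_n) = f(x_1,…,x_{i−1},0,x_{i+1},…,x_n) for all choices of the remaining coordinates. -/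
/-!
Pair each input `x` with the input obtained by flipping its `i`-th coordinate. A pair `(x⁰, x¹)`
with `x⁰ i = false`, `x¹ i = true` contributes `f x¹ + (1 - f x⁰)` to `a_i`, so
`a_i = 2^(n-1) + ∑ (f x¹ - f x⁰)`. For a threshold function every difference `f x¹ - f x⁰` has
the sign of the weight `w_i`, so the sum vanishes exactly when every difference does.
-/

open Finset Function

lemma dotProd_update {n : ℕ} (w : Fin n → ℚ) (x : Fin n → Bool) (i : Fin n) (b : Bool) :
    dotProd w (update x i b) =
      (if b then w i else 0) + ∑ j ∈ univ \ {i}, if x j then w j else 0 := by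
  unfold dotProd
  simp_rw [apply_update (fun j (c : Bool) => if c then w j else 0)]
  exact sum_update_of_mem (mem_univ i) _ _

section Realization

variable {n : ℕ} {f : (Fin n → Bool) → Bool} {w : Fin n → ℚ} {θ : ℚ} {i : Fin n}

lemma IsRealization.update_false_le_update_true (hf : IsRealization f w θ) (hi : 0 ≤ w i)
    (x : Fin n → Bool) : f (update x i false) ≤ f (update x i true) := by
  rw [Bool.le_iff_imp, hf, hf, dotProd_update, dotProd_update]
  simp only [Bool.false_eq_true, if_false, if_true]
  exact fun h => by linarith

lemma IsRealization.update_true_le_update_false (hf : IsRealization f w θ) (hi : w i ≤ 0)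
    (x : Fin n → Bool) : f (update x i true) ≤ f (update x i false) := by
  rw [Bool.le_iff_imp, hf, hf, dotProd_update, dotProd_update]
  simp only [Bool.false_eq_true, if_false, if_true]
  exact fun h => by linarith

end Realization

def chowParam {ι : Type*} [Fintype ι] [DecidableEq ι] (f : (ι → Bool) → Bool) (i : ι) : ℕ :=
  #{x | f x = true ∧ x i = true} + #{x | f x = false ∧ x i = false}

lemma chowParam_eq_sum {m : ℕ} (f : (Fin (m + 1) → Bool) → Bool) (i : Fin (m + 1)) :
    chowParam f i = ∑ y : Fin m → Bool,
      ((f (i.insertNth true y)).toNat + (!f (i.insertNth false y)).toNat) := by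
  rw [chowParam, card_filter, card_filter, ← sum_add_distrib,
    ← (Fin.insertNthEquiv (fun _ => Bool) i).sum_comp, Fintype.sum_prod_type_right]
  refine Fintype.sum_congr _ _ fun y => ?_
  dsimp only [Fin.insertNthEquiv, Equiv.coe_fn_mk]
  simp only [Fintype.sum_bool, Fin.insertNth_apply_same]
  cases f (i.insertNth true y) <;> cases f (i.insertNth false y) <;> rfl

lemma Bool.toNat_add_toNat_not_eq_one_iff (a b : Bool) : a.toNat + (!b).toNat = 1 ↔ a = b := by
  cases a <;> cases b <;> decide

lemma Bool.one_le_toNat_add_toNat_not {a b : Bool} : b ≤ a → 1 ≤ a.toNat + (!b).toNat := by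
  cases a <;> cases b <;> decide

lemma Bool.toNat_add_toNat_not_le_one {a b : Bool} : a ≤ b → a.toNat + (!b).toNat ≤ 1 := by
  cases a <;> cases b <;> decide

lemma Fintype.sum_eq_card_iff {α : Type*} [Fintype α] {t : α → ℕ}
    (h : (∀ a, 1 ≤ t a) ∨ ∀ a, t a ≤ 1) : ∑ a, t a = Fintype.card α ↔ ∀ a, t a = 1 := by
  rw [Fintype.card_eq_sum_ones]
  rcases h with h | h
  · rw [eq_comm, sum_eq_sum_iff_of_le fun a _ => h a]
    simp only [mem_univ, true_implies, eq_comm]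
  · rw [sum_eq_sum_iff_of_le fun a _ => h a]
    simp only [mem_univ, true_implies]

lemma Fin.forall_update_iff_forall_insertNth {m : ℕ} {α : Type*} (i : Fin (m + 1))
    (P : (Fin (m + 1) → α) → (Fin (m + 1) → α) → Prop) (a b : α) :
    (∀ x, P (update x i a) (update x i b)) ↔ ∀ y, P (i.insertNth a y) (i.insertNth b y) := by
  refine ⟨fun h y => ?_, fun h x => ?_⟩
  · simpa using h (i.insertNth a y)
  · simpa using h (i.removeNth x)

theorem chowParam_eq_two_pow_iff {m : ℕ} (f : (Fin (m + 1) → Bool) → Bool) (i : Fin (m + 1))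
    (hf : (∀ x, f (update x i false) ≤ f (update x i true)) ∨
      ∀ x, f (update x i true) ≤ f (update x i false)) :
    chowParam f i = 2 ^ m ↔ ∀ x, f (update x i true) = f (update x i false) := by
  rw [Fin.forall_update_iff_forall_insertNth i (fun x₁ x₀ => f x₁ = f x₀)]
  rw [Fin.forall_update_iff_forall_insertNth i (fun x₀ x₁ => f x₀ ≤ f x₁),
    Fin.forall_update_iff_forall_insertNth i (fun x₁ x₀ => f x₁ ≤ f x₀)] at hf
  have hcard : 2 ^ m = Fintype.card (Fin m → Bool) := by simp
  rw [chowParam_eq_sum, hcard, Fintype.sum_eq_card_iff]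
  · simp only [Bool.toNat_add_toNat_not_eq_one_iff]
  · exact hf.imp (fun h y => Bool.one_le_toNat_add_toNat_not (h y))
      (fun h y => Bool.toNat_add_toNat_not_le_one (h y))

/-- The `i`-th Chow parameter of an LTF equals `2^(n-1)` iff `f` is independent of its
`i`-th coordinate. -/
theorem stmt_15 (n : ℕ) (f : (Fin n → Bool) → Bool) (hf : IsLTF f) (i : Fin n) :
    (Finset.univ.filter fun x : Fin n → Bool => f x = true ∧ x i = true).card +
        (Finset.univ.filter fun x : Fin n → Bool => f x = false ∧ x i = false).card =
      2 ^ (n - 1) ↔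
      ∀ x : Fin n → Bool, f (Function.update x i true) = f (Function.update x i false) := by
  obtain ⟨w, θ, hw⟩ := hf
  obtain ⟨m, rfl⟩ : ∃ m, n = m + 1 := Nat.exists_eq_succ_of_ne_zero i.pos.ne'
  rw [Nat.add_sub_cancel]
  exact chowParam_eq_two_pow_iff f i <| (le_total 0 (w i)).imp
    hw.update_false_le_update_true hw.update_true_le_update_false
end

section
/- For all n ≥ 0, the number LTF(n) of linear threshold functions on n variables satisfies LTF(n) = Σ_{k=0}^{n} binom(n, k) · 2^k · SGold(k), where SGold(k) denotes the number of Semi-Goldilocks linear threshold functions on k variables. -/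
/-- `f` is Semi-Goldilocks: an LTF with a positive realization and a small realization. -/
def SemiGoldilocks {n : ℕ} (f : (Fin n → Bool) → Bool) : Prop :=
  IsLTF f ∧ (∃ w θ, IsRealization f w θ ∧ ∀ i, 0 < w i) ∧
    (∃ w θ, IsRealization f w θ ∧ ∀ i, w i ≤ θ)

/-- The number of LTFs on `n` variables. -/
noncomputable def LTFcount (n : ℕ) : ℕ := Set.ncard {f : (Fin n → Bool) → Bool | IsLTF f}

/-- The number of Semi-Goldilocks LTFs on `n` variables. -/
noncomputable def SGoldCount (n : ℕ) : ℕ := Set.ncard {f : (Fin n → Bool) → Bool | SemiGoldilocks f}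

/-!
Call an LTF essential if it depends on all of its variables. Sorting the LTFs on `n` variables by
the set of variables they depend on gives `LTF(n) = ∑ C(n, k) E(k)`, and in the same way
`M(n) = ∑ C(n, k) E₊(k)` for the LTFs with nonnegative weights. Flipping the variables of negative
weight turns an essential LTF into an essential monotone one, and for essential functions the flip
is unique, so `E(k) = 2^k E₊(k)`. Sorting the monotone LTFs instead by the set of basis vectors on
which they are `true` (on those variables the function is an `or`) gives
`M(n) = ∑ C(n, k) SGold(k)`, because a nonnegatively weighted LTF is Semi-Goldilocks exactly when
it is `false` on every basis vector. Binomial inversion then yields `E₊ = SGold`.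
-/

namespace ThresholdFunction

open Finset Function

abbrev BoolFun (ι : Type*) := (ι → Bool) → Bool

variable {ι κ : Type*}

def weightedSum [Fintype ι] (w : ι → ℚ) (x : ι → Bool) : ℚ := ∑ i, if x i then w i else 0

def Realizes [Fintype ι] (f : BoolFun ι) (w : ι → ℚ) (θ : ℚ) : Prop :=
  ∀ x, f x = true ↔ θ < weightedSum w x

def IsLTFWith [Fintype ι] (W : Set ℚ) (f : BoolFun ι) : Prop :=
  ∃ w θ, Realizes f w θ ∧ ∀ i, w i ∈ W

def DependsOn [DecidableEq ι] (f : BoolFun ι) (i : ι) : Prop :=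
  ∃ x, f (update x i true) ≠ f (update x i false)

def basisVec [DecidableEq ι] (i : ι) : ι → Bool := fun j => decide (j = i)

def IsSemiGoldilocks [Fintype ι] [DecidableEq ι] (f : BoolFun ι) : Prop :=
  IsLTFWith (Set.Ici 0) f ∧ ∀ i, f (basisVec i) = false

section WeightedSum

variable [Fintype ι] {w v : ι → ℚ}

lemma weightedSum_basisVec [DecidableEq ι] (w : ι → ℚ) (i : ι) :
    weightedSum w (basisVec i) = w i := by
  simp [weightedSum, basisVec]

lemma weightedSum_congr {x : ι → Bool} (h : ∀ i, x i = true → w i = v i) :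
    weightedSum w x = weightedSum v x :=
  sum_congr rfl fun i _ => by by_cases hx : x i <;> simp [hx, h]

lemma weightedSum_add (w v : ι → ℚ) (x : ι → Bool) :
    weightedSum (w + v) x = weightedSum w x + weightedSum v x := by
  simp only [weightedSum, ← sum_add_distrib]
  exact sum_congr rfl fun i _ => by by_cases hx : x i <;> simp [hx]

lemma weightedSum_mono (hw : ∀ i, 0 ≤ w i) : Monotone (weightedSum w) := fun x y hxy =>
  sum_le_sum fun i _ => by
    have := Bool.le_iff_imp.1 (hxy i)
    cases hx : x i <;> cases hy : y i <;> simp_all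

lemma weightedSum_nonneg (hw : ∀ i, 0 ≤ w i) (x : ι → Bool) : 0 ≤ weightedSum w x :=
  sum_nonneg fun i _ => by by_cases hx : x i <;> simp [hx, hw i]

lemma weightedSum_const_le {η : ℚ} (hη : 0 ≤ η) (x : ι → Bool) :
    weightedSum (fun _ => η) x ≤ Fintype.card ι * η := by
  simpa [weightedSum] using sum_le_sum fun i (_ : i ∈ univ) => show
    (if x i then η else 0) ≤ η by by_cases hx : x i <;> simp [hx, hη]

end WeightedSum

section Realizes

variable [Fintype ι] {f : BoolFun ι} {w : ι → ℚ} {θ : ℚ}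

lemma Realizes.monotone (h : Realizes f w θ) (hw : ∀ i, 0 ≤ w i) : Monotone f :=
  fun x y hxy => Bool.le_iff_imp.2 fun hx =>
    (h y).2 (((h x).1 hx).trans_le (weightedSum_mono hw hxy))

lemma IsLTFWith.monotone (h : IsLTFWith (Set.Ici 0) f) : Monotone f := by
  obtain ⟨w, θ, hr, hw⟩ := h
  exact hr.monotone hw

lemma Realizes.exists_margin (h : Realizes f w θ) :
    ∃ δ > 0, ∀ x, f x = true → θ + δ ≤ weightedSum w x := by
  classical
  by_cases hne : ∃ x, f x = true
  · obtain ⟨x₀, hx₀⟩ := hne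
    obtain ⟨m, hm, hmin⟩ := exists_min_image {x | f x = true} (weightedSum w) ⟨x₀, by simpa⟩
    have hθm : θ < weightedSum w m := (h m).1 (by simpa using hm)
    exact ⟨(weightedSum w m - θ) / 2, by linarith, fun x hx => by
      linarith [hmin x (by simpa using hx)]⟩
  · exact ⟨1, one_pos, fun x hx => absurd ⟨x, hx⟩ hne⟩

/-- Adding a small common amount `η` to all weights keeps the function, provided the threshold
moves up by `card ι * η`, which stays below the margin of the `true` points. -/
lemma Realizes.exists_lt_weights (h : Realizes f w θ) :
    ∃ u θ', Realizes f u θ' ∧ ∀ i, w i < u i := by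
  obtain ⟨δ, hδ, hmargin⟩ := h.exists_margin
  set n : ℚ := (Fintype.card ι : ℚ)
  set η : ℚ := δ / (n + 1)
  have hη : 0 < η := by positivity
  have hnη : n * η < δ := by
    rw [show η = δ / (n + 1) from rfl, mul_div_assoc', div_lt_iff₀ (by positivity)]
    nlinarith
  refine ⟨w + fun _ => η, θ + n * η, fun x => ?_, fun i => by simpa using hη⟩
  have hlo : 0 ≤ weightedSum (fun _ => η) x := weightedSum_nonneg (fun _ => hη.le) x
  have hhi := weightedSum_const_le hη.le x
  rw [weightedSum_add]
  constructor
  · intro hx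
    linarith [hmargin x hx]
  · intro hlt
    by_contra hfx
    have := (h x).not.1 hfx
    linarith

end Realizes

section Dependence

variable [DecidableEq ι] {f : BoolFun ι}

lemma apply_update_of_not_dependsOn {i : ι} (h : ¬DependsOn f i) (x : ι → Bool) (b : Bool) :
    f (update x i b) = f x := by
  have key : ∀ b c, f (update x i b) = f (update x i c) := by
    simp only [DependsOn, ne_eq, not_exists, not_not] at h
    intro b c
    cases b <;> cases c <;> simp [h x]
  rw [key b (x i), update_eq_self]

lemma apply_eq_of_eqOn [Fintype ι] {s : Set ι} (hs : ∀ i, DependsOn f i → i ∈ s) {x y : ι → Bool}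
    (hxy : Set.EqOn x y s) : f x = f y := by
  suffices ∀ D : Finset ι, (∀ i ∈ D, i ∉ s) → ∀ z, (∀ i ∉ D, z i = y i) → f z = f y from
    this {i | x i ≠ y i} (fun i hi his => by simp_all [hxy his]) x fun i hi => by simpa using hi
  intro D
  induction D using Finset.induction_on with
  | empty => exact fun _ z hz => congrArg f (funext fun i => hz i (notMem_empty i))
  | insert i D _ ih =>
    intro hD z hz
    have hi : ¬DependsOn f i := fun hd => hD i (mem_insert_self i D) (hs i hd)
    rw [← apply_update_of_not_dependsOn hi z (y i)]
    refine ih (fun j hj => hD j (mem_insert_of_mem hj)) _ fun j hj => ?_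
    by_cases hji : j = i
    · simp [hji]
    · simpa [hji] using hz j (by simp [hji, hj])

end Dependence

section Embedding

variable (e : κ ↪ ι)

noncomputable def extendFalse (y : κ → Bool) : ι → Bool := extend e y fun _ => false

lemma extendFalse_apply_self (y : κ → Bool) (j : κ) : extendFalse e y (e j) = y j :=
  e.injective.extend_apply _ _ j

lemma extendFalse_comp (y : κ → Bool) : extendFalse e y ∘ e = y :=
  extend_comp e.injective _ _

lemma extendFalse_apply_of_notMem_range (y : κ → Bool) {i : ι} (hi : i ∉ Set.range e) :
    extendFalse e y i = false :=
  extend_apply' _ _ _ hi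

lemma extendFalse_basisVec [DecidableEq ι] [DecidableEq κ] (j : κ) :
    extendFalse e (basisVec j) = basisVec (e j) := by
  funext i
  by_cases hi : i ∈ Set.range e
  · obtain ⟨j', rfl⟩ := hi
    simp [extendFalse_apply_self, basisVec]
  · rw [extendFalse_apply_of_notMem_range e _ hi]
    simp [basisVec, show i ≠ e j from fun h => hi ⟨j, h.symm⟩]

lemma basisVec_comp [DecidableEq ι] [DecidableEq κ] (j : κ) :
    basisVec (e j) ∘ e = basisVec j := by
  funext j'
  simp [basisVec]

lemma weightedSum_extendFalse [Fintype ι] [Fintype κ] (w : ι → ℚ) (y : κ → Bool) :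
    weightedSum w (extendFalse e y) = weightedSum (w ∘ e) y :=
  (Fintype.sum_of_injective e e.injective _ _
    (fun i hi => by simp [extendFalse_apply_of_notMem_range e y hi])
    (fun j => by simp [extendFalse_apply_self])).symm

lemma weightedSum_extend_zero [Fintype ι] [Fintype κ] (w : κ → ℚ) (x : ι → Bool) :
    weightedSum (extend e w 0) x = weightedSum w (x ∘ e) :=
  (Fintype.sum_of_injective e e.injective _ _
    (fun i hi => by simp [extend_apply' _ _ _ hi])
    (fun j => by simp [e.injective.extend_apply])).symm

variable {W : Set ℚ}

lemma IsLTFWith.comp_extendFalse [Fintype ι] [Fintype κ] {f : BoolFun ι} (h : IsLTFWith W f) :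
    IsLTFWith W fun y => f (extendFalse e y) := by
  obtain ⟨w, θ, hr, hw⟩ := h
  exact ⟨w ∘ e, θ, fun y => by rw [hr, weightedSum_extendFalse], fun j => hw (e j)⟩

lemma IsLTFWith.comp_restrict [Fintype ι] [Fintype κ] (h0 : 0 ∈ W) {g : BoolFun κ}
    (h : IsLTFWith W g) :
    IsLTFWith W fun x => g (x ∘ e) := by
  obtain ⟨w, θ, hr, hw⟩ := h
  refine ⟨extend e w 0, θ, fun x => by rw [hr, weightedSum_extend_zero], fun i => ?_⟩
  by_cases hi : ∃ j, e j = i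
  · obtain ⟨j, rfl⟩ := hi
    simpa [e.injective.extend_apply] using hw j
  · simpa [extend_apply' _ _ _ hi] using h0

lemma dependsOn_comp_restrict_iff [DecidableEq ι] [DecidableEq κ] {g : BoolFun κ} {i : ι} :
    DependsOn (fun x => g (x ∘ e)) i ↔ ∃ j, e j = i ∧ DependsOn g j := by
  constructor
  · rintro ⟨x, hx⟩
    by_cases hi : ∃ j, e j = i
    · obtain ⟨j, rfl⟩ := hi
      refine ⟨j, rfl, x ∘ e, ?_⟩
      simpa only [update_comp_eq_of_injective _ e.injective] using hx
    · push Not at hi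
      simp only [update_comp_eq_of_forall_ne _ _ hi] at hx
      exact absurd rfl hx
  · rintro ⟨j, rfl, y, hy⟩
    refine ⟨extendFalse e y, ?_⟩
    simpa only [update_comp_eq_of_injective _ e.injective, extendFalse_comp] using hy

lemma apply_extendFalse_comp [Fintype ι] [DecidableEq ι] {f : BoolFun ι}
    (hf : ∀ i, DependsOn f i → i ∈ Set.range e)
    (x : ι → Bool) : f (extendFalse e (x ∘ e)) = f x :=
  apply_eq_of_eqOn hf <| by
    rintro _ ⟨j, rfl⟩
    simp [extendFalse_apply_self]

lemma DependsOn.comp_extendFalse [Fintype ι] [DecidableEq ι] [DecidableEq κ] {f : BoolFun ι}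
    (hf : ∀ i, DependsOn f i → i ∈ Set.range e)
    {j : κ} (h : DependsOn f (e j)) : DependsOn (fun y => f (extendFalse e y)) j := by
  obtain ⟨x, hx⟩ := h
  refine ⟨x ∘ e, ?_⟩
  simpa only [← update_comp_eq_of_injective _ e.injective, apply_extendFalse_comp e hf] using hx

end Embedding

section Counting

lemma exists_embedding_range_eq (S : Finset ι) :
    ∃ e : Fin S.card ↪ ι, Set.range e = S :=
  ⟨S.equivFin.symm.toEmbedding.trans (Embedding.subtype _), by
    ext i
    simp [Equiv.exists_congr_left S.equivFin.symm]⟩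

lemma card_eq_sum_choose_mul [Fintype ι] {α : Type*} [Finite α] (P : α → Prop)
    (Q : α → ι → Prop) (c : ℕ → ℕ)
    (hc : ∀ k (e : Fin k ↪ ι), Nat.card {a // P a ∧ ∀ i, Q a i ↔ i ∈ Set.range e} = c k) :
    Nat.card {a // P a} =
      ∑ k ∈ range (Fintype.card ι + 1), (Fintype.card ι).choose k * c k := by
  classical
  have hfiber : ∀ S : Finset ι, Nat.card {a : {a // P a} // univ.filter (Q a) = S} = c S.card := by
    intro S
    obtain ⟨e, he⟩ := exists_embedding_range_eq S
    rw [← hc _ e, he]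
    exact Nat.card_congr <|
      (Equiv.subtypeSubtypeEquivSubtypeInter P fun a => univ.filter (Q a) = S).trans <|
        Equiv.subtypeEquivRight fun a => by simp [Finset.ext_iff]
  rw [← Nat.card_congr (Equiv.sigmaFiberEquiv fun a : {a // P a} => univ.filter (Q a)),
    Nat.card_sigma, sum_congr rfl fun S _ => hfiber S, ← powerset_univ,
    sum_powerset_apply_card, card_univ]
  simp only [smul_eq_mul]

lemma eq_of_sum_choose_mul_eq {a b : ℕ → ℕ}
    (h : ∀ n, ∑ k ∈ range (n + 1), n.choose k * a k = ∑ k ∈ range (n + 1), n.choose k * b k) :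
    a = b := by
  funext n
  induction n using Nat.strong_induction_on with
  | _ n ih =>
    have := h n
    rw [sum_range_succ, sum_range_succ, sum_congr rfl fun k hk => by rw [ih k (mem_range.1 hk)],
      Nat.choose_self] at this
    simpa using this

end Counting

section Essential

noncomputable def essentialCount (W : Set ℚ) (k : ℕ) : ℕ :=
  Nat.card {f : BoolFun (Fin k) // IsLTFWith W f ∧ ∀ i, DependsOn f i}

variable [Fintype ι] [DecidableEq ι] {W : Set ℚ}

noncomputable def essentialFiberEquiv [Fintype κ] [DecidableEq κ] (h0 : 0 ∈ W) (e : κ ↪ ι) :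
    {f : BoolFun ι // IsLTFWith W f ∧ ∀ i, DependsOn f i ↔ i ∈ Set.range e} ≃
      {g : BoolFun κ // IsLTFWith W g ∧ ∀ j, DependsOn g j} where
  toFun f := ⟨fun y => f.1 (extendFalse e y), f.2.1.comp_extendFalse e,
    fun j => (f.2.2 (e j)).2 ⟨j, rfl⟩ |>.comp_extendFalse e fun i => (f.2.2 i).1⟩
  invFun g := ⟨fun x => g.1 (x ∘ e), g.2.1.comp_restrict e h0, fun i => by
    simp [dependsOn_comp_restrict_iff, g.2.2]⟩
  left_inv f := Subtype.ext <| funext <| apply_extendFalse_comp e fun i => (f.2.2 i).1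
  right_inv g := Subtype.ext <| funext fun y => by simp only [extendFalse_comp]

lemma card_isLTFWith (h0 : 0 ∈ W) :
    Nat.card {f : BoolFun ι // IsLTFWith W f} =
      ∑ k ∈ range (Fintype.card ι + 1), (Fintype.card ι).choose k * essentialCount W k :=
  card_eq_sum_choose_mul _ DependsOn _ fun _ e => Nat.card_congr (essentialFiberEquiv h0 e)

end Essential

section Orientation

def flipBits (ε x : ι → Bool) : ι → Bool := fun i => xor (x i) (ε i)

lemma flipBits_flipBits (ε δ x : ι → Bool) :
    flipBits ε (flipBits δ x) = flipBits (flipBits ε δ) x := by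
  funext i
  simp [flipBits]

@[simp]
lemma flipBits_flipBits_self (ε x : ι → Bool) : flipBits ε (flipBits ε x) = x := by
  funext i
  simp [flipBits]

lemma flipBits_update [DecidableEq ι] (ε x : ι → Bool) (i : ι) (b : Bool) :
    flipBits ε (update x i b) = update (flipBits ε x) i (xor b (ε i)) := by
  funext j
  by_cases hji : j = i
  · subst hji; simp [flipBits]
  · simp [flipBits, hji]

lemma weightedSum_flipBits [Fintype ι] (w : ι → ℚ) (ε x : ι → Bool) :
    weightedSum w (flipBits ε x) =
      (∑ i, if ε i then w i else 0) + weightedSum (fun i => if ε i then -w i else w i) x := by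
  simp only [weightedSum, ← sum_add_distrib]
  refine sum_congr rfl fun i _ => ?_
  by_cases hx : x i <;> by_cases hε : ε i <;> simp [flipBits, hx, hε]

lemma Realizes.comp_flipBits [Fintype ι] {f : BoolFun ι} {w : ι → ℚ} {θ : ℚ}
    (h : Realizes f w θ) (ε : ι → Bool) :
    Realizes (fun x => f (flipBits ε x)) (fun i => if ε i then -w i else w i)
      (θ - ∑ i, if ε i then w i else 0) := fun x => by
  rw [h, weightedSum_flipBits]
  constructor <;> intro <;> linarith

variable [DecidableEq ι] {f : BoolFun ι} {i : ι}

lemma DependsOn.comp_flipBits (h : DependsOn f i) (ε : ι → Bool) :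
    DependsOn (fun x => f (flipBits ε x)) i := by
  obtain ⟨x, hx⟩ := h
  refine ⟨flipBits ε x, ?_⟩
  simp only [flipBits_update, flipBits_flipBits_self]
  cases ε i
  · simpa using hx
  · simpa using hx.symm

lemma DependsOn.exists_of_monotone (h : DependsOn f i) (hf : Monotone f) :
    ∃ x, f (update x i false) = false ∧ f (update x i true) = true := by
  obtain ⟨x, hx⟩ := h
  have hle := hf (update_le_update_iff'.2 (Bool.false_le true) : update x i false ≤ update x i true)
  refine ⟨x, ?_⟩
  revert hx hle
  cases f (update x i false) <;> cases f (update x i true) <;> decide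

lemma eq_false_of_monotone_comp_flipBits {ε : ι → Bool} (hf : Monotone f)
    (hfε : Monotone fun x => f (flipBits ε x)) (hi : DependsOn f i) : ε i = false := by
  obtain ⟨x, hx₀, hx₁⟩ := hi.exists_of_monotone hf
  cases hεi : ε i
  · rfl
  · have hle := hfε (update_le_update_iff'.2 (Bool.false_le true) :
      update (flipBits ε x) i false ≤ update (flipBits ε x) i true)
    simp [flipBits_update, hεi, hx₀, hx₁] at hle
    exact absurd hle (by decide)

lemma eq_of_comp_flipBits_eq {g₁ g₂ : BoolFun ι} {ε₁ ε₂ : ι → Bool} (h₁ : Monotone g₁)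
    (h₂ : Monotone g₂) (hdep : ∀ i, DependsOn g₁ i)
    (h : ∀ x, g₁ (flipBits ε₁ x) = g₂ (flipBits ε₂ x)) : ε₁ = ε₂ ∧ g₁ = g₂ := by
  have hg₂ : (fun x => g₁ (flipBits (flipBits ε₁ ε₂) x)) = g₂ := funext fun x => by
    rw [← flipBits_flipBits, h, flipBits_flipBits_self]
  have hε : ε₁ = ε₂ := funext fun i => by
    have := eq_false_of_monotone_comp_flipBits h₁ (hg₂ ▸ h₂) (hdep i)
    revert this
    simp only [flipBits]
    cases ε₁ i <;> cases ε₂ i <;> decide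
  subst hε
  exact ⟨rfl, funext fun x => by simpa using h (flipBits ε₁ x)⟩

variable [Fintype ι]

/-- Every LTF is a monotone LTF composed with the flip of its negatively weighted coordinates,
and for functions depending on all coordinates the flip is unique. -/
lemma card_essential_eq_two_pow_mul :
    Nat.card {f : BoolFun ι // IsLTFWith Set.univ f ∧ ∀ i, DependsOn f i} =
      2 ^ Fintype.card ι *
        Nat.card {g : BoolFun ι // IsLTFWith (Set.Ici 0) g ∧ ∀ i, DependsOn g i} := by
  let F : (ι → Bool) × {g : BoolFun ι // IsLTFWith (Set.Ici 0) g ∧ ∀ i, DependsOn g i} →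
      {f : BoolFun ι // IsLTFWith Set.univ f ∧ ∀ i, DependsOn f i} := fun p =>
    ⟨fun x => p.2.1 (flipBits p.1 x), by
      obtain ⟨w, θ, hr, -⟩ := p.2.2.1
      exact ⟨_, _, hr.comp_flipBits p.1, fun _ => trivial⟩,
      fun i => (p.2.2.2 i).comp_flipBits p.1⟩
  have hF : Function.Bijective F := by
    constructor
    · rintro ⟨ε₁, g₁⟩ ⟨ε₂, g₂⟩ h
      obtain ⟨hε, hg⟩ := eq_of_comp_flipBits_eq g₁.2.1.monotone g₂.2.1.monotone g₁.2.2
        (congrFun (congrArg Subtype.val h))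
      exact Prod.ext hε (Subtype.ext hg)
    · rintro ⟨f, ⟨w, θ, hr, -⟩, hdep⟩
      let ε : ι → Bool := fun i => decide (w i < 0)
      refine ⟨⟨ε, fun x => f (flipBits ε x), ⟨_, _, hr.comp_flipBits ε, fun i => ?_⟩,
        fun i => (hdep i).comp_flipBits ε⟩, Subtype.ext <| funext fun x => by simp [F]⟩
      by_cases hw : w i < 0 <;> simp [ε, hw] <;> linarith
  rw [← Nat.card_congr (Equiv.ofBijective F hF), Nat.card_prod, Nat.card_fun]
  simp

lemma essentialCount_univ_eq_two_pow_mul (k : ℕ) :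
    essentialCount Set.univ k = 2 ^ k * essentialCount (Set.Ici 0) k := by
  have := card_essential_eq_two_pow_mul (ι := Fin k)
  rwa [Fintype.card_fin] at this

end Orientation

section SemiGoldilocks

lemma basisVec_le_iff [DecidableEq ι] {i : ι} {x : ι → Bool} : basisVec i ≤ x ↔ x i = true :=
  ⟨fun h => Bool.le_iff_imp.1 (h i) (by simp [basisVec]), fun h j => Bool.le_iff_imp.2 fun hj =>
    by rwa [show j = i by simpa [basisVec] using hj]⟩

lemma Monotone.apply_eq_true_of_basisVec [DecidableEq ι] {g : BoolFun ι} (hg : Monotone g)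
    {i : ι} (hi : g (basisVec i) = true) {x : ι → Bool} (hx : x i = true) : g x = true :=
  Bool.le_iff_imp.1 (hg (basisVec_le_iff.2 hx)) hi

variable [Fintype ι]

/-- Giving the coordinates in `p` a weight above the threshold forces the value `true` as soon as
one of them is set. -/
lemma IsLTFWith.or_exists {g : BoolFun ι} (h : IsLTFWith (Set.Ici 0) g) (p : ι → Prop)
    [DecidablePred p] :
    IsLTFWith (Set.Ici 0) fun x => decide (∃ i, p i ∧ x i = true) || g x := by
  classical
  obtain ⟨w, θ, hr, hw⟩ := h
  let u : ι → ℚ := fun i => if p i then |θ| + 1 else w i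
  have hu : ∀ i, 0 ≤ u i := fun i => by
    by_cases hi : p i
    · simp only [u, hi, if_true]; positivity
    · simpa [u, hi] using hw i
  refine ⟨u, θ, fun x => ?_, hu⟩
  by_cases hx : ∃ i, p i ∧ x i = true
  · obtain ⟨i, hpi, hxi⟩ := hx
    have hle := weightedSum_mono hu (basisVec_le_iff.2 hxi)
    rw [weightedSum_basisVec, show u i = |θ| + 1 from if_pos hpi] at hle
    simp only [show ∃ i, p i ∧ x i = true from ⟨i, hpi, hxi⟩, decide_true, Bool.true_or, true_iff]
    linarith [le_abs_self θ]
  · have hux : weightedSum u x = weightedSum w x :=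
      weightedSum_congr fun i hxi => if_neg fun hpi => hx ⟨i, hpi, hxi⟩
    simp only [hx, decide_false, Bool.false_or, hux]
    exact hr x

variable [DecidableEq ι] [Fintype κ] [DecidableEq κ]

open scoped Classical in
/-- A monotone LTF `g` is determined by the set of coordinates `i` with `g (basisVec i) = true`,
on which it is the `or`, and by its restriction to the remaining coordinates. -/
noncomputable def semiGoldilocksFiberEquiv (e : κ ↪ ι) :
    {g : BoolFun ι // IsLTFWith (Set.Ici 0) g ∧
        ∀ i, g (basisVec i) = false ↔ i ∈ Set.range e} ≃
      {h : BoolFun κ // IsSemiGoldilocks h} where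
  toFun g := ⟨fun y => g.1 (extendFalse e y), g.2.1.comp_extendFalse e, fun j => by
    simpa [extendFalse_basisVec] using (g.2.2 (e j)).2 ⟨j, rfl⟩⟩
  invFun h := ⟨fun x => decide (∃ i, i ∉ Set.range e ∧ x i = true) || h.1 (x ∘ e),
    (h.2.1.comp_restrict e le_rfl).or_exists _, fun i => by
      by_cases hi : i ∈ Set.range e
      · obtain ⟨j, rfl⟩ := hi
        have hno : ¬∃ i, i ∉ Set.range e ∧ basisVec (e j) i = true := fun ⟨i, hi, hji⟩ =>
          hi ⟨j, by simpa [basisVec, eq_comm] using hji⟩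
        simp only [hno, decide_false, Bool.false_or, basisVec_comp, h.2.2 j, Set.mem_range_self]
      · have hyes : ∃ i', i' ∉ Set.range e ∧ basisVec i i' = true := ⟨i, hi, by simp [basisVec]⟩
        simp only [hyes, decide_true, Bool.true_or, hi, Bool.true_eq_false]⟩
  left_inv g := Subtype.ext <| funext fun x => by
    by_cases hx : ∃ i, i ∉ Set.range e ∧ x i = true
    · obtain ⟨i, hi, hxi⟩ := hx
      have hgi : g.1 (basisVec i) = true := by simpa [hi] using (g.2.2 i).not.2 hi
      simp only [show ∃ i, i ∉ Set.range e ∧ x i = true from ⟨i, hi, hxi⟩, decide_true,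
        Bool.true_or]
      exact (Monotone.apply_eq_true_of_basisVec g.2.1.monotone hgi hxi).symm
    · have hxe : extendFalse e (x ∘ e) = x := funext fun i => by
        by_cases hi : i ∈ Set.range e
        · obtain ⟨j, rfl⟩ := hi
          simp [extendFalse_apply_self]
        · rw [extendFalse_apply_of_notMem_range e _ hi]
          simpa [hi] using fun hxi => hx ⟨i, hi, hxi⟩
      simp only [hx, decide_false, Bool.false_or, hxe]
  right_inv h := Subtype.ext <| funext fun y => by
    have hno : ¬∃ i, i ∉ Set.range e ∧ extendFalse e y i = true := fun ⟨i, hi, hyi⟩ => by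
      rw [extendFalse_apply_of_notMem_range e y hi] at hyi
      exact Bool.false_ne_true hyi
    simp only [hno, decide_false, Bool.false_or, extendFalse_comp]

lemma card_isLTFWith_Ici :
    Nat.card {f : BoolFun ι // IsLTFWith (Set.Ici 0) f} =
      ∑ k ∈ range (Fintype.card ι + 1), (Fintype.card ι).choose k *
        Nat.card {h : BoolFun (Fin k) // IsSemiGoldilocks h} :=
  card_eq_sum_choose_mul _ (fun g i => g (basisVec i) = false) _ fun _ e =>
    Nat.card_congr (semiGoldilocksFiberEquiv e)

end SemiGoldilocks

lemma essentialCount_Ici_eq_card_isSemiGoldilocks (k : ℕ) :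
    essentialCount (Set.Ici 0) k = Nat.card {h : BoolFun (Fin k) // IsSemiGoldilocks h} := by
  refine congrFun (eq_of_sum_choose_mul_eq (a := essentialCount (Set.Ici 0))
    (b := fun k => Nat.card {h : BoolFun (Fin k) // IsSemiGoldilocks h}) fun n => ?_) k
  have := (card_isLTFWith (ι := Fin n) le_rfl).symm.trans card_isLTFWith_Ici
  rwa [Fintype.card_fin] at this

lemma isLTF_iff {n : ℕ} (f : BoolFun (Fin n)) : IsLTF f ↔ IsLTFWith Set.univ f :=
  ⟨fun ⟨w, θ, h⟩ => ⟨w, θ, h, fun _ => trivial⟩, fun ⟨w, θ, h, _⟩ => ⟨w, θ, h⟩⟩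

/-- A nonnegative realization can be made positive and then, as the function is `false` on the
basis vectors, it is automatically small. -/
lemma semiGoldilocks_iff {n : ℕ} (f : BoolFun (Fin n)) : SemiGoldilocks f ↔ IsSemiGoldilocks f := by
  constructor
  · rintro ⟨-, ⟨w, θ, hr, hpos⟩, ⟨w', θ', hr', hsmall⟩⟩
    refine ⟨⟨w, θ, hr, fun i => (hpos i).le⟩, fun i => Bool.eq_false_iff.2 fun hi => ?_⟩
    have hlt : θ' < weightedSum w' (basisVec i) := (hr' _).1 hi
    rw [weightedSum_basisVec] at hlt
    exact (hsmall i).not_gt hlt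
  · rintro ⟨⟨w, θ, hr, hw⟩, hbasis⟩
    obtain ⟨u, θ', hr', hlt⟩ := hr.exists_lt_weights
    refine ⟨⟨w, θ, hr⟩, ⟨u, θ', hr', fun i => (hw i).trans_lt (hlt i)⟩, ⟨u, θ', hr', fun i => ?_⟩⟩
    rw [← weightedSum_basisVec u i]
    exact not_lt.1 fun h => Bool.false_ne_true ((hbasis i).symm.trans ((hr' _).2 h))

lemma LTFcount_eq_card (n : ℕ) :
    LTFcount n = Nat.card {f : BoolFun (Fin n) // IsLTFWith Set.univ f} := by
  rw [LTFcount, ← Nat.card_coe_set_eq]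
  exact Nat.card_congr (Equiv.subtypeEquivRight isLTF_iff)

lemma SGoldCount_eq_card (n : ℕ) :
    SGoldCount n = Nat.card {f : BoolFun (Fin n) // IsSemiGoldilocks f} := by
  rw [SGoldCount, ← Nat.card_coe_set_eq]
  exact Nat.card_congr (Equiv.subtypeEquivRight semiGoldilocks_iff)

end ThresholdFunction

/-- `LTF(n) = ∑_{k=0}^{n} binom(n, k) · 2^k · SGold(k)`. -/
theorem stmt_19 (n : ℕ) :
    LTFcount n = ∑ k ∈ Finset.range (n + 1), Nat.choose n k * 2 ^ k * SGoldCount k := by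
  rw [ThresholdFunction.LTFcount_eq_card, ThresholdFunction.card_isLTFWith (Set.mem_univ 0),
    Fintype.card_fin]
  refine Finset.sum_congr rfl fun k _ => ?_
  rw [ThresholdFunction.essentialCount_univ_eq_two_pow_mul,
    ThresholdFunction.essentialCount_Ici_eq_card_isSemiGoldilocks,
    ThresholdFunction.SGoldCount_eq_card, mul_assoc]
end
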